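/- arXiv:1405.3436 — 3 statements merged into one kernel-verified Lean document; each statement's English description precedes it below -/
import Mathlib

section
/- Let D be a (v,k,λ)-design with block number b and replication number r. Then γ(D) ≥ v·(r-1)/(kr-1) + b·(k-1)/(kr-1), where the right-hand side is a real number. -/
open Finset

variable {α ι : Type*}

/-- The incidence (Levi) graph of the block family `B` indexed by `ι` over point set `α`:
a bipartite graph where point `p` is adjacent to block `i` iff `p ∈ B i`. -/
def incGraph (B : ι → Finset α) : SimpleGraph (α ⊕ ι) where
  Adj x y :=
    (∃ p i, x = Sum.inl p ∧ y = Sum.inr i ∧ p ∈ B i) ∨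
    (∃ p i, x = Sum.inr i ∧ y = Sum.inl p ∧ p ∈ B i)
  symm := by
    constructor
    rintro x y (⟨p, i, rfl, rfl, h⟩ | ⟨p, i, rfl, rfl, h⟩)
    · exact Or.inr ⟨p, i, rfl, rfl, h⟩
    · exact Or.inl ⟨p, i, rfl, rfl, h⟩
  loopless := by
    constructor
    rintro x (⟨p, i, rfl, h, -⟩ | ⟨p, i, rfl, h, -⟩) <;> simp at h

/-- A dominating set of vertices in a graph: every vertex not in `S` has a neighbour in `S`. -/
def IsDomSet {V : Type*} (G : SimpleGraph V) (S : Finset V) : Prop :=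
  ∀ v ∉ S, ∃ s ∈ S, G.Adj v s

/-- The domination number of a graph: the minimum size of a dominating set. -/
noncomputable def domNum {V : Type*} (G : SimpleGraph V) : ℕ :=
  sInf {n | ∃ S : Finset V, IsDomSet G S ∧ S.card = n}

/-!
Take a minimum dominating set `S` of the incidence graph, with `p` points and `q` blocks.
Every point outside `S` lies in one of the `q` blocks of `S`, and every block outside `S`
contains one of the `p` points of `S`; hence `v ≤ p + k q` and `b ≤ q + r p`.
Adding `r - 1` times the first inequality to `k - 1` times the second gives
`(r - 1) v + (k - 1) b ≤ (k r - 1) (p + q) = (k r - 1) γ(D)`.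
-/

theorem exists_isDomSet_card_eq_domNum {V : Type*} [Fintype V] (G : SimpleGraph V) :
    ∃ S : Finset V, IsDomSet G S ∧ #S = domNum G :=
  Nat.sInf_mem (s := {n | ∃ S : Finset V, IsDomSet G S ∧ #S = n})
    ⟨_, univ, fun v hv => absurd (mem_univ v) hv, rfl⟩

section incGraph

variable {B : ι → Finset α}

@[simp]
theorem incGraph_adj_inl_inr {p : α} {i : ι} :
    (incGraph B).Adj (.inl p) (.inr i) ↔ p ∈ B i := by
  simp [incGraph]

@[simp]
theorem incGraph_adj_inr_inl {p : α} {i : ι} :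
    (incGraph B).Adj (.inr i) (.inl p) ↔ p ∈ B i := by
  simp [incGraph]

@[simp]
theorem incGraph_not_adj_inl_inl {p p' : α} : ¬(incGraph B).Adj (.inl p) (.inl p') := by
  simp [incGraph]

@[simp]
theorem incGraph_not_adj_inr_inr {i i' : ι} : ¬(incGraph B).Adj (.inr i) (.inr i') := by
  simp [incGraph]

namespace IsDomSet

variable {S : Finset (α ⊕ ι)}

theorem exists_mem_toRight (hS : IsDomSet (incGraph B) S) {p : α} (hp : p ∉ S.toLeft) :
    ∃ i ∈ S.toRight, p ∈ B i := by
  obtain ⟨s | i, hs, hadj⟩ := hS _ (mem_toLeft.not.mp hp)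
  · exact absurd hadj incGraph_not_adj_inl_inl
  · exact ⟨i, mem_toRight.mpr hs, incGraph_adj_inl_inr.mp hadj⟩

theorem exists_mem_toLeft (hS : IsDomSet (incGraph B) S) {i : ι} (hi : i ∉ S.toRight) :
    ∃ p ∈ S.toLeft, p ∈ B i := by
  obtain ⟨p | s, hs, hadj⟩ := hS _ (mem_toRight.not.mp hi)
  · exact ⟨p, mem_toLeft.mpr hs, incGraph_adj_inr_inl.mp hadj⟩
  · exact absurd hadj incGraph_not_adj_inr_inr

theorem card_points_le [Fintype α] (hS : IsDomSet (incGraph B) S) {k : ℕ}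
    (hblock : ∀ i, #(B i) ≤ k) : Fintype.card α ≤ #S.toLeft + k * #S.toRight := by
  classical
  have hcover : (univ : Finset α) ⊆ S.toLeft ∪ S.toRight.biUnion B := by
    intro p _
    by_cases hp : p ∈ S.toLeft
    · exact mem_union_left _ hp
    · obtain ⟨i, hi, hpi⟩ := hS.exists_mem_toRight hp
      exact mem_union_right _ (mem_biUnion.mpr ⟨i, hi, hpi⟩)
  calc Fintype.card α = #(univ : Finset α) := (card_univ).symm
    _ ≤ #S.toLeft + #(S.toRight.biUnion B) := (card_le_card hcover).trans (card_union_le _ _)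
    _ ≤ #S.toLeft + k * #S.toRight := by
      rw [mul_comm]
      gcongr
      exact card_biUnion_le_card_mul _ _ _ fun i _ => hblock i

theorem card_blocks_le [Fintype ι] [DecidableEq α] (hS : IsDomSet (incGraph B) S) {r : ℕ}
    (hrep : ∀ p, #{i | p ∈ B i} ≤ r) : Fintype.card ι ≤ #S.toRight + r * #S.toLeft := by
  classical
  have hcover : (univ : Finset ι) ⊆ S.toRight ∪ S.toLeft.biUnion fun p => {i | p ∈ B i} := by
    intro i _
    by_cases hi : i ∈ S.toRight
    · exact mem_union_left _ hi
    · obtain ⟨p, hp, hpi⟩ := hS.exists_mem_toLeft hi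
      exact mem_union_right _ (mem_biUnion.mpr ⟨p, hp, mem_filter.mpr ⟨mem_univ i, hpi⟩⟩)
  calc Fintype.card ι = #(univ : Finset ι) := (card_univ).symm
    _ ≤ #S.toRight + #(S.toLeft.biUnion fun p => {i | p ∈ B i}) :=
      (card_le_card hcover).trans (card_union_le _ _)
    _ ≤ #S.toRight + r * #S.toLeft := by
      rw [mul_comm]
      gcongr
      exact card_biUnion_le_card_mul _ _ _ fun p _ => hrep p

end IsDomSet

end incGraph

theorem pairCount_le_replication [Fintype α] [Fintype ι] [DecidableEq α]
    {B : ι → Finset α} {l r : ℕ} (hα : 1 < Fintype.card α)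
    (hpair : ∀ x y : α, x ≠ y → #{i | x ∈ B i ∧ y ∈ B i} = l)
    (hrep : ∀ x : α, #{i | x ∈ B i} = r) : l ≤ r := by
  obtain ⟨x, y, hxy⟩ := Fintype.exists_pair_of_one_lt_card hα
  rw [← hpair x y hxy, ← hrep x]
  exact card_le_card (monotone_filter_right _ fun _ _ h => h.1)

theorem div_add_div_le_of_le_add_mul {v b p q k r : ℝ} (hk : 1 ≤ k) (hr : 1 ≤ r)
    (hkr : 1 < k * r) (hv : v ≤ p + k * q) (hb : b ≤ q + r * p) :
    v * (r - 1) / (k * r - 1) + b * (k - 1) / (k * r - 1) ≤ p + q := by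
  rw [← add_div, div_le_iff₀ (sub_pos.mpr hkr)]
  nlinarith [mul_le_mul_of_nonneg_right hv (sub_nonneg.mpr hr),
    mul_le_mul_of_nonneg_right hb (sub_nonneg.mpr hk)]

/-- For a `(v,k,λ)`-design with `b` blocks and replication number `r`,
`γ(D) ≥ v(r-1)/(kr-1) + b(k-1)/(kr-1)` as real numbers. -/
theorem stmt1 [Fintype α] [Fintype ι] [DecidableEq α]
    (B : ι → Finset α) (v k l b r : ℕ)
    (hv : Fintype.card α = v)
    (hk2 : 2 ≤ k) (hkv : k < v) (hl : 1 ≤ l)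
    (hblock : ∀ i, (B i).card = k)
    (hpair : ∀ x y : α, x ≠ y →
      (Finset.univ.filter fun i => x ∈ B i ∧ y ∈ B i).card = l)
    (hb : Fintype.card ι = b)
    (hrep : ∀ x : α, (Finset.univ.filter fun i => x ∈ B i).card = r) :
    (v : ℝ) * ((r : ℝ) - 1) / ((k : ℝ) * (r : ℝ) - 1)
      + (b : ℝ) * ((k : ℝ) - 1) / ((k : ℝ) * (r : ℝ) - 1)
      ≤ (domNum (incGraph B) : ℝ) := by
  obtain ⟨S, hS, hcard⟩ := exists_isDomSet_card_eq_domNum (incGraph B)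
  have hr : 1 ≤ r :=
    hl.trans (pairCount_le_replication (by omega : 1 < Fintype.card α) hpair hrep)
  have hpoints : v ≤ #S.toLeft + k * #S.toRight := hv ▸ hS.card_points_le fun i => (hblock i).le
  have hblocks : b ≤ #S.toRight + r * #S.toLeft := hb ▸ hS.card_blocks_le fun x => (hrep x).le
  rw [← hcard, ← card_toLeft_add_card_toRight, Nat.cast_add]
  exact div_add_div_le_of_le_add_mul (by norm_cast; omega) (by exact_mod_cast hr)
    (by norm_cast; nlinarith) (by exact_mod_cast hpoints) (by exact_mod_cast hblocks)
end

section
/- Let D be a (v,k,λ)-design with replication number r. Then γ(D) ≤ τ(D) + r. -/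
/-! A minimum transversal `T` dominates every block vertex. Fix a point `x ∈ T`: since `λ ≥ 1`,
every other point shares a block with `x`, so `T` together with the `r` blocks through `x` is a
dominating set of size `τ + r`. -/

open Finset

variable {α ι : Type*}

/-- The transversal number of the block family `B`: the minimum size of a set of points
meeting every block. -/
noncomputable def transNum (B : ι → Finset α) : ℕ :=
  sInf {n | ∃ T : Finset α, (∀ i, ∃ x ∈ B i, x ∈ T) ∧ T.card = n}

namespace incGraph

variable (B : ι → Finset α)

@[simp]
lemma adj_inl_inr {p : α} {i : ι} : (incGraph B).Adj (.inl p) (.inr i) ↔ p ∈ B i := by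
  simp [incGraph]

@[simp]
lemma adj_inr_inl {p : α} {i : ι} : (incGraph B).Adj (.inr i) (.inl p) ↔ p ∈ B i := by
  simp [incGraph]

end incGraph

lemma domNum_le_card {V : Type*} {G : SimpleGraph V} {S : Finset V} (hS : IsDomSet G S) :
    domNum G ≤ S.card :=
  Nat.sInf_le ⟨S, hS, rfl⟩

lemma exists_transversal_card_eq_transNum [Fintype α] (B : ι → Finset α)
    (hB : ∀ i, (B i).Nonempty) :
    ∃ T : Finset α, (∀ i, ∃ x ∈ B i, x ∈ T) ∧ T.card = transNum B :=
  Nat.sInf_mem (s := {n | ∃ T : Finset α, (∀ i, ∃ x ∈ B i, x ∈ T) ∧ T.card = n})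
    ⟨_, univ, fun i => (hB i).imp fun x hx => ⟨hx, mem_univ x⟩, rfl⟩

lemma isDomSet_disjSum_blocks_through [Fintype ι] [DecidableEq α] (B : ι → Finset α)
    {T : Finset α} (hT : ∀ i, ∃ x ∈ B i, x ∈ T) {x : α} (hx : x ∈ T)
    (hcover : ∀ y, y ≠ x → ∃ i, y ∈ B i ∧ x ∈ B i) :
    IsDomSet (incGraph B) (T.disjSum {i | x ∈ B i}) := by
  rintro (y | i) hS
  · have hyx : y ≠ x := by
      rintro rfl
      exact hS (inl_mem_disjSum.mpr hx)
    obtain ⟨i, hy, hxi⟩ := hcover y hyx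
    exact ⟨.inr i, inr_mem_disjSum.mpr (by simpa using hxi), by simpa using hy⟩
  · obtain ⟨t, ht, htT⟩ := hT i
    exact ⟨.inl t, inl_mem_disjSum.mpr htT, by simpa using ht⟩

lemma exists_domNum_le_transNum_add_card_blocks_through [Fintype α] [Fintype ι] [DecidableEq α]
    [Nonempty ι] (B : ι → Finset α) (hB : ∀ i, (B i).Nonempty)
    (hcover : ∀ x y, x ≠ y → ∃ i, x ∈ B i ∧ y ∈ B i) :
    ∃ x, domNum (incGraph B) ≤ transNum B + #{i | x ∈ B i} := by
  obtain ⟨T, hT, hTcard⟩ := exists_transversal_card_eq_transNum B hB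
  obtain ⟨x, -, hx⟩ := hT (Classical.arbitrary ι)
  refine ⟨x, ?_⟩
  calc domNum (incGraph B) ≤ (T.disjSum {i | x ∈ B i}).card :=
        domNum_le_card (isDomSet_disjSum_blocks_through B hT hx fun y hy => hcover y x hy)
    _ = transNum B + #{i | x ∈ B i} := by rw [card_disjSum, hTcard]

/-- For a `(v,k,λ)`-design with replication number `r`,
`γ(D) ≤ τ(D) + r`. -/
theorem stmt4 [Fintype α] [Fintype ι] [DecidableEq α]
    (B : ι → Finset α) (v k l r : ℕ)
    (hv : Fintype.card α = v)
    (hk2 : 2 ≤ k) (hkv : k < v) (hl : 1 ≤ l)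
    (hblock : ∀ i, (B i).card = k)
    (hpair : ∀ x y : α, x ≠ y →
      (Finset.univ.filter fun i => x ∈ B i ∧ y ∈ B i).card = l)
    (hrep : ∀ x : α, (Finset.univ.filter fun i => x ∈ B i).card = r) :
    domNum (incGraph B) ≤ transNum B + r := by
  have hcover : ∀ x y, x ≠ y → ∃ i, x ∈ B i ∧ y ∈ B i := fun x y hxy => by
    obtain ⟨i, hi⟩ := card_pos.mp (hpair x y hxy ▸ hl)
    exact ⟨i, (mem_filter.mp hi).2⟩
  obtain ⟨x₀, y₀, hxy⟩ := Fintype.exists_pair_of_one_lt_card (by omega : 1 < Fintype.card α)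
  have : Nonempty ι := (hcover x₀ y₀ hxy).nonempty
  have hB : ∀ i, (B i).Nonempty := fun i => card_pos.mp (by rw [hblock i]; omega)
  obtain ⟨x, hx⟩ := exists_domNum_le_transNum_add_card_blocks_through B hB hcover
  exact hx.trans_eq (by rw [← hrep x])
end

section
/- Let D be a (v,k,λ)-design, let S be a dominating set of the incidence graph G_D, and let P = π(S) be the set of points of D belonging to S. Then |S| ≥ ⌈(v + |P|·(k-1))/k⌉. -/
open Finset

variable {α ι : Type*}

/-
A point outside `S` is dominated by a block of `S`, so the `v - |P|` points outside `S` are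
covered by the blocks of `S`, at most `k` by each: `v ≤ |P| + k (|S| - |P|)`, which rearranges
to `k |S| ≥ v + |P| (k - 1)`.
-/

theorem incGraph_adj_inl {B : ι → Finset α} {p : α} {x : α ⊕ ι} :
    (incGraph B).Adj (Sum.inl p) x ↔ ∃ i, x = Sum.inr i ∧ p ∈ B i := by
  simp [incGraph]

namespace IsDomSet

variable {B : ι → Finset α} {S : Finset (α ⊕ ι)}

theorem mem_biUnion_toRight [DecidableEq α] (hS : IsDomSet (incGraph B) S) {p : α}
    (hp : p ∉ S.toLeft) : p ∈ S.toRight.biUnion B := by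
  obtain ⟨s, hs, hadj⟩ := hS (Sum.inl p) (mem_toLeft.not.mp hp)
  obtain ⟨i, rfl, hpi⟩ := incGraph_adj_inl.mp hadj
  exact mem_biUnion.mpr ⟨i, mem_toRight.mpr hs, hpi⟩

theorem card_le_card_toLeft_add_mul [Fintype α] (hS : IsDomSet (incGraph B) S) {k : ℕ}
    (hB : ∀ i, (B i).card ≤ k) : Fintype.card α ≤ S.toLeft.card + k * S.toRight.card := by
  classical
  have hcover : S.toLeftᶜ ⊆ S.toRight.biUnion B := fun p hp =>
    hS.mem_biUnion_toRight (mem_compl.mp hp)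
  calc Fintype.card α = S.toLeft.card + S.toLeftᶜ.card := (card_add_card_compl _).symm
    _ ≤ S.toLeft.card + ∑ i ∈ S.toRight, (B i).card :=
      Nat.add_le_add_left ((card_le_card hcover).trans card_biUnion_le) _
    _ ≤ S.toLeft.card + k * S.toRight.card := by
      grw [sum_le_card_nsmul _ _ k fun i _ => hB i, smul_eq_mul, mul_comm]

theorem add_card_toLeft_mul_le [Fintype α] (hS : IsDomSet (incGraph B) S) {k : ℕ}
    (hk : 1 ≤ k) (hB : ∀ i, (B i).card ≤ k) :
    Fintype.card α + S.toLeft.card * (k - 1) ≤ k * S.card := by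
  have hcount := hS.card_le_card_toLeft_add_mul hB
  rw [← card_toLeft_add_card_toRight]
  obtain ⟨j, rfl⟩ := Nat.exists_eq_add_of_le' hk
  simp only [Nat.add_sub_cancel] at hcount ⊢
  nlinarith

end IsDomSet

theorem stmt8_general [Fintype α]
    (B : ι → Finset α) (v k : ℕ)
    (hv : Fintype.card α = v)
    (hk2 : 2 ≤ k)
    (hblock : ∀ i, (B i).card = k)
    (S : Finset (α ⊕ ι)) (hS : IsDomSet (incGraph B) S)
    (P : Finset α) (hP : ∀ x : α, x ∈ P ↔ Sum.inl x ∈ S) :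
    (v + P.card * (k - 1)) ⌈/⌉ k ≤ S.card := by
  have hPS : P = S.toLeft := ext fun x => (hP x).trans mem_toLeft.symm
  rw [ceilDiv_le_iff_le_mul (by omega), ← hv, hPS]
  exact hS.add_card_toLeft_mul_le (by omega) fun i => (hblock i).le

/-- Let `S` be a dominating set in the incidence graph of a
`(v,k,λ)`-design and `P = π(S)` the set of points in `S`. Then
`|S| ≥ ⌈(v + |P|(k-1))/k⌉`. -/
theorem stmt8 [Fintype α] [Fintype ι] [DecidableEq α]
    (B : ι → Finset α) (v k l : ℕ)
    (hv : Fintype.card α = v)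
    (hk2 : 2 ≤ k) (hkv : k < v) (hl : 1 ≤ l)
    (hblock : ∀ i, (B i).card = k)
    (hpair : ∀ x y : α, x ≠ y →
      (Finset.univ.filter fun i => x ∈ B i ∧ y ∈ B i).card = l)
    (S : Finset (α ⊕ ι)) (hS : IsDomSet (incGraph B) S)
    (P : Finset α) (hP : ∀ x : α, x ∈ P ↔ Sum.inl x ∈ S) :
    (v + P.card * (k - 1)) ⌈/⌉ k ≤ S.card :=
  stmt8_general B v k hv hk2 hblock S hS P hP
end
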